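/- As θ → 0⁺ with s = sin(θ/2), the quantity I₂(θ) = (α₂+α₄)²/(α₂α₄), where α₂ = −((cos θ−1)+sin θ)/(2(cos θ−1) sin θ) and α₄ = 1/sin θ, has the asymptotic expansion I₂ = 1/(2s) + 3/2 + (7/4)s + 2s² + (47/16)s³ + 4s⁴ + O(s⁵). -/

import Mathlib

/-!
With `s = sin (θ/2)` and `c = cos (θ/2)`, the half-angle formulas give
`I₂ = (c + s)² / (2s(c - s)) = (c(1 + 2s²) + s(3 - 2s²)) / (2s(1 - 2s²))`, using `c² + s² = 1`.
Hence only `c(1 + 2s²) = √((1 - s²)(1 + 2s²)²)` needs expanding: it agrees with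
`1 + 3/2 s² - 9/8 s⁴ - 47/4 s⁶` up to `O(s⁶)`, because the squares of the two differ by `O(s⁶)`
and their sum is at least `1`. Dividing by `2s(1 - 2s²) ≥ s` costs one power of `s`.
-/

open Real

noncomputable def α₂ (θ : ℝ) : ℝ := -((cos θ - 1) + sin θ) / (2 * (cos θ - 1) * sin θ)

noncomputable def α₄ (θ : ℝ) : ℝ := 1 / sin θ

noncomputable def I₂ (θ : ℝ) : ℝ := (α₂ θ + α₄ θ) ^ 2 / (α₂ θ * α₄ θ)

theorem α₂_two_mul {t : ℝ} (hs : sin t ≠ 0) (hc : cos t ≠ 0) :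
    α₂ (2 * t) = (cos t - sin t) / (4 * sin t ^ 2 * cos t) := by
  rw [α₂, sin_two_mul, cos_two_mul_eq_one_sub]
  field_simp
  ring

theorem I₂_two_mul {t : ℝ} (hs : sin t ≠ 0) (hc : cos t ≠ 0) (hcs : cos t - sin t ≠ 0) :
    I₂ (2 * t) = (cos t + sin t) ^ 2 / (2 * sin t * (cos t - sin t)) := by
  rw [I₂, α₂_two_mul hs hc, α₄, sin_two_mul]
  field_simp
  ring

theorem abs_sub_le_abs_sq_sub_sq {a b : ℝ} (h : 1 ≤ a + b) : |a - b| ≤ |a ^ 2 - b ^ 2| := by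
  rw [sq_sub_sq, abs_mul, abs_of_pos (by linarith : 0 < a + b)]
  nlinarith [abs_nonneg (a - b)]

theorem abs_mul_one_add_two_mul_sub_taylor_le {u c : ℝ} (hu : 0 ≤ u) (hu' : u ≤ 1 / 16)
    (hc : 0 ≤ c) (hcu : c ^ 2 = 1 - u) :
    |c * (1 + 2 * u) - (1 + 3 / 2 * u - 9 / 8 * u ^ 2 - 47 / 4 * u ^ 3)| ≤ 26 * u ^ 3 := by
  have hsq : (c * (1 + 2 * u)) ^ 2 - (1 + 3 / 2 * u - 9 / 8 * u ^ 2 - 47 / 4 * u ^ 3) ^ 2 =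
      u ^ 3 * (183 / 8 + 2175 / 64 * u - 423 / 16 * u ^ 2 - 2209 / 16 * u ^ 3) := by
    linear_combination (1 + 2 * u) ^ 2 * hcu
  have hbound : |183 / 8 + 2175 / 64 * u - 423 / 16 * u ^ 2 - 2209 / 16 * u ^ 3| ≤ 26 := by
    rw [abs_le]
    constructor <;> nlinarith
  calc _ ≤ |(c * (1 + 2 * u)) ^ 2 - (1 + 3 / 2 * u - 9 / 8 * u ^ 2 - 47 / 4 * u ^ 3) ^ 2| :=
        abs_sub_le_abs_sq_sub_sq (by nlinarith)
    _ ≤ u ^ 3 * 26 := by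
        rw [hsq, abs_mul, abs_of_nonneg (by positivity)]
        exact mul_le_mul_of_nonneg_left hbound (by positivity)
    _ = 26 * u ^ 3 := mul_comm _ _

theorem abs_sq_div_sub_expansion_le {s c : ℝ} (hs : 0 < s) (hs' : s ≤ 1 / 4) (hc : 0 ≤ c)
    (hcs : c ^ 2 + s ^ 2 = 1) :
    |(c + s) ^ 2 / (2 * s * (c - s)) -
        (1 / (2 * s) + 3 / 2 + 7 / 4 * s + 2 * s ^ 2 + 47 / 16 * s ^ 3 + 4 * s ^ 4)| ≤
      30 * s ^ 5 := by
  have hprod : (c - s) * (c + s) = 1 - 2 * s ^ 2 := by linear_combination hcs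
  have hcube : (c + s) ^ 3 = c * (1 + 2 * s ^ 2) + s * (3 - 2 * s ^ 2) := by
    linear_combination (c + 3 * s) * hcs
  have hden : s ≤ 2 * s * (1 - 2 * s ^ 2) := by nlinarith
  have hden_pos := hs.trans_le hden
  have hdiff : (c + s) ^ 2 / (2 * s * (c - s)) -
        (1 / (2 * s) + 3 / 2 + 7 / 4 * s + 2 * s ^ 2 + 47 / 16 * s ^ 3 + 4 * s ^ 4) =
      (c * (1 + 2 * s ^ 2) - (1 + 3 / 2 * s ^ 2 - 9 / 8 * (s ^ 2) ^ 2 - 47 / 4 * (s ^ 2) ^ 3)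
        + 16 * s ^ 7) / (2 * s * (1 - 2 * s ^ 2)) := by
    have hne : 1 - 2 * s ^ 2 ≠ 0 := by nlinarith
    rw [← mul_div_mul_right _ _ (by positivity : c + s ≠ 0), ← pow_succ, mul_assoc, hprod,
      hcube]
    field_simp
    ring
  have hnum : |c * (1 + 2 * s ^ 2) - (1 + 3 / 2 * s ^ 2 - 9 / 8 * (s ^ 2) ^ 2 -
      47 / 4 * (s ^ 2) ^ 3) + 16 * s ^ 7| ≤ 30 * s ^ 6 :=
    calc _ ≤ 26 * (s ^ 2) ^ 3 + |16 * s ^ 7| :=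
          (abs_add_le _ _).trans (add_le_add_left
            (abs_mul_one_add_two_mul_sub_taylor_le (by positivity) (by nlinarith) hc
              (by linarith)) _)
      _ ≤ 30 * s ^ 6 := by
          rw [abs_of_pos (by positivity)]
          nlinarith [pow_pos hs 6]
  rw [hdiff, abs_div, abs_of_pos hden_pos, div_le_iff₀ hden_pos]
  calc _ ≤ 30 * s ^ 6 := hnum
    _ = 30 * s ^ 5 * s := by ring
    _ ≤ 30 * s ^ 5 * (2 * s * (1 - 2 * s ^ 2)) := by gcongr

/-- asymptotic expansion of `I₂(θ) = (α₂+α₄)²/(α₂α₄)` as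
`θ → 0⁺`, with `s = sin(θ/2)`:
`I₂ = 1/(2s) + 3/2 + (7/4)s + 2s² + (47/16)s³ + 4s⁴ + O(s⁵)`. -/
theorem I2_asymptotic :
    ∃ C > (0 : ℝ), ∃ δ > (0 : ℝ), ∀ θ : ℝ, 0 < θ → θ < δ →
      |(-((cos θ - 1) + sin θ) / (2 * (cos θ - 1) * sin θ) + 1 / sin θ) ^ 2 /
          (-((cos θ - 1) + sin θ) / (2 * (cos θ - 1) * sin θ) * (1 / sin θ)) -
        (1 / (2 * sin (θ / 2)) + 3 / 2 + 7 / 4 * sin (θ / 2) +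
          2 * sin (θ / 2) ^ 2 + 47 / 16 * sin (θ / 2) ^ 3 +
          4 * sin (θ / 2) ^ 4)| ≤
      C * sin (θ / 2) ^ 5 := by
  refine ⟨30, by norm_num, 1 / 2, by norm_num, fun θ hθ hθδ => ?_⟩
  change |I₂ θ - _| ≤ _
  obtain ⟨t, rfl⟩ : ∃ t, θ = 2 * t := ⟨θ / 2, by ring⟩
  rw [mul_div_cancel_left₀ t two_ne_zero]
  have ht : 0 < t := by linarith
  have hs : 0 < sin t := sin_pos_of_pos_of_lt_pi ht (by linarith [pi_gt_three])
  have hs' : sin t ≤ 1 / 4 := (sin_lt ht).le.trans (by linarith)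
  have hc : 0 < cos t := cos_pos_of_mem_Ioo ⟨by linarith [pi_gt_three], by linarith [pi_gt_three]⟩
  have hcs : sin t ^ 2 + cos t ^ 2 = 1 := sin_sq_add_cos_sq t
  have hsc : cos t - sin t ≠ 0 := by nlinarith
  rw [I₂_two_mul hs.ne' hc.ne' hsc]
  exact abs_sq_div_sub_expansion_le hs hs' hc.le (by linarith)
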